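/- arXiv:1907.05926 — 4 statements merged into one kernel-verified Lean document; each statement's English description precedes it below -/
import Mathlib

section
/- For every real number d with 0 < d < 1 and positive integers x, y, if (x+1)^d - x^d ≥ y^d / y (i.e., ≥ y^(d-1)), then y ≥ d^(1/(d-1)) * x. -/
theorem load_ratio_bound (d : ℝ) (hd0 : 0 < d) (hd1 : d < 1)
    (x y : ℕ) (hx : 0 < x) (hy : 0 < y)
    (h : ((x : ℝ) + 1) ^ d - (x : ℝ) ^ d ≥ (y : ℝ) ^ d / (y : ℝ)) :
    (y : ℝ) ≥ d ^ (1 / (d - 1)) * (x : ℝ) := by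
  have hx0 : (0:ℝ) < x := by exact_mod_cast hx
  have hy0 : (0:ℝ) < y := by exact_mod_cast hy
  have hd1' : d - 1 < 0 := by linarith
  have hne : d - 1 ≠ 0 := by linarith
  -- Step 1: (x+1)^d - x^d ≤ d * x^(d-1)
  have key : ((x:ℝ) + 1) ^ d - (x:ℝ) ^ d ≤ d * (x:ℝ) ^ (d - 1) := by
    have hb : (1 + 1/(x:ℝ)) ^ d ≤ 1 + d * (1/(x:ℝ)) := by
      apply rpow_one_add_le_one_add_mul_self _ hd0.le hd1.le
      have : (0:ℝ) < 1/(x:ℝ) := by positivity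
      linarith
    have hfactor : ((x:ℝ) + 1) ^ d = (x:ℝ) ^ d * (1 + 1/(x:ℝ)) ^ d := by
      rw [← Real.mul_rpow hx0.le (by positivity)]
      congr 1
      field_simp
    have hxd : (0:ℝ) < (x:ℝ) ^ d := Real.rpow_pos_of_pos hx0 d
    have hsub : (x:ℝ) ^ (d - 1) = (x:ℝ) ^ d / x := by
      rw [Real.rpow_sub hx0, Real.rpow_one]
    rw [hfactor, hsub]
    have := mul_le_mul_of_nonneg_left hb hxd.le
    calc (x:ℝ) ^ d * (1 + 1/(x:ℝ)) ^ d - (x:ℝ) ^ d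
        ≤ (x:ℝ) ^ d * (1 + d * (1/(x:ℝ))) - (x:ℝ) ^ d := by linarith
      _ = d * ((x:ℝ) ^ d / x) := by field_simp; ring
  -- Step 2: y^(d-1) ≤ d * x^(d-1)
  have hyd : (y:ℝ) ^ (d - 1) ≤ d * (x:ℝ) ^ (d - 1) := by
    have : (y:ℝ) ^ (d - 1) = (y:ℝ) ^ d / y := by
      rw [Real.rpow_sub hy0, Real.rpow_one]
    linarith [le_trans this.le (le_trans h key)]
  -- Step 3: c := d^(1/(d-1)) * x satisfies c^(d-1) = d * x^(d-1)
  set c : ℝ := d ^ (1 / (d - 1)) * (x:ℝ) with hc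
  have hc0 : 0 < c := by
    have := Real.rpow_pos_of_pos hd0 (1/(d-1)); positivity
  have hcpow : c ^ (d - 1) = d * (x:ℝ) ^ (d - 1) := by
    rw [hc, Real.mul_rpow (Real.rpow_pos_of_pos hd0 _).le hx0.le,
      ← Real.rpow_mul hd0.le, one_div, inv_mul_cancel₀ hne, Real.rpow_one]
  -- Conclude by antitonicity of rpow with negative exponent
  by_contra hlt
  push_neg at hlt
  have := Real.rpow_lt_rpow_of_neg hy0 hlt hd1'
  rw [hcpow] at this
  linarith
end

section
/- For every positive integer h and real d with 0 < d < 1, let n = h^2 + h. Then the ratio [∑_{j=1}^h 2 j^d] / (h^2 + h)^d is Ω(n^((1-d)/2)); concretely, ∑_{j=1}^h 2 j^d ≥ (2/(d+1))(h^(d+1) - 1), and hence the ratio is at least (2/(d+1)) · (h^(d+1) - 1) / (h^2+h)^d. -/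
/-! For `d ≥ 0` the map `x ↦ x ^ d` is monotone, so `∑_{j=1}^h j ^ d` dominates
`∫_0^h x ^ d dx = h ^ (d + 1) / (d + 1)`, which exceeds `(h ^ (d + 1) - 1) / (d + 1)`;
the bound on the ratio follows by dividing by the nonnegative `(h ^ 2 + h) ^ d`. -/

open Finset intervalIntegral

theorem rpow_add_one_div_le_sum_Icc_rpow {d : ℝ} (hd : 0 ≤ d) (h : ℕ) :
    (h : ℝ) ^ (d + 1) / (d + 1) ≤ ∑ j ∈ Icc 1 h, (j : ℝ) ^ d := by
  have hmono : MonotoneOn (fun x : ℝ => x ^ d) (Set.Icc (0 : ℕ) h) := fun x hx y _ hxy =>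
    Real.rpow_le_rpow (by simpa using hx.1) hxy hd
  calc (h : ℝ) ^ (d + 1) / (d + 1) = ∫ x in (0 : ℕ)..(h : ℕ), x ^ d := by
        rw [integral_rpow (Or.inl (by linarith))]
        simp [Real.zero_rpow (by linarith : d + 1 ≠ 0)]
    _ ≤ ∑ i ∈ Ico 0 h, ((i + 1 : ℕ) : ℝ) ^ d := hmono.integral_le_sum_Ico h.zero_le
    _ = ∑ j ∈ Icc 1 h, (j : ℝ) ^ d := by
        rw [sum_Ico_add' (fun j : ℕ => (j : ℝ) ^ d), zero_add, Ico_add_one_right_eq_Icc]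

theorem poa_lower_bound_instance_general (d : ℝ) (hd0 : 0 < d)
    (h : ℕ) :
    (∑ j ∈ Finset.Icc 1 h, 2 * (j : ℝ) ^ d ≥ (2 / (d + 1)) * ((h : ℝ) ^ (d + 1) - 1)) ∧
    (∑ j ∈ Finset.Icc 1 h, 2 * (j : ℝ) ^ d) / ((h : ℝ) ^ 2 + (h : ℝ)) ^ d
      ≥ (2 / (d + 1)) * ((h : ℝ) ^ (d + 1) - 1) / ((h : ℝ) ^ 2 + (h : ℝ)) ^ d := by
  have hsum : (2 / (d + 1)) * ((h : ℝ) ^ (d + 1) - 1) ≤ ∑ j ∈ Icc 1 h, 2 * (j : ℝ) ^ d := by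
    have hint := rpow_add_one_div_le_sum_Icc_rpow hd0.le h
    have hexpand : (2 / (d + 1)) * ((h : ℝ) ^ (d + 1) - 1)
        = 2 * ((h : ℝ) ^ (d + 1) / (d + 1)) - 2 / (d + 1) := by ring
    have hpos : 0 < 2 / (d + 1) := by positivity
    rw [← mul_sum]
    linarith
  exact ⟨hsum, div_le_div_of_nonneg_right hsum (by positivity)⟩

theorem poa_lower_bound_instance (d : ℝ) (hd0 : 0 < d) (hd1 : d < 1)
    (h : ℕ) (hh : 0 < h) :
    (∑ j ∈ Finset.Icc 1 h, 2 * (j : ℝ) ^ d ≥ (2 / (d + 1)) * ((h : ℝ) ^ (d + 1) - 1)) ∧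
    (∑ j ∈ Finset.Icc 1 h, 2 * (j : ℝ) ^ d) / ((h : ℝ) ^ 2 + (h : ℝ)) ^ d
      ≥ (2 / (d + 1)) * ((h : ℝ) ^ (d + 1) - 1) / ((h : ℝ) ^ 2 + (h : ℝ)) ^ d :=
  poa_lower_bound_instance_general d hd0 h
end

section
/- In the lower bound instance with cost c(x) = x^d (0 < d < 1), the assignment placing, for each j = 1,...,h, the j jobs with window [-j,0] on slot -j and the j jobs with window [0,j] on slot j is a Nash equilibrium: for each job on slot t, the load on t is |t|, and every other slot t' in its window satisfies load(t') + 1 ≤ |t|, so since x ↦ x^d/x is strictly decreasing on positive integers, deviating does not decrease the job's cost share. -/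
/-- Load in the Nash equilibrium of the lower bound instance: slot `t ∈ [-h, h]`
holds `|t|` jobs (the `j` jobs with window `[-j,0]` sit on `-j`, the `j` jobs
with window `[0,j]` sit on `j`). -/
def lbLoad (h : ℕ) (t : ℤ) : ℕ := if t.natAbs ≤ h then t.natAbs else 0

lemma pow_div_antitone (d : ℝ) (hd0 : 0 < d) (hd1 : d < 1) {a b : ℕ}
    (ha : 1 ≤ a) (hab : a ≤ b) :
    (b : ℝ) ^ d / (b : ℝ) ≤ (a : ℝ) ^ d / (a : ℝ) := by
  have ha' : (0 : ℝ) < a := by exact_mod_cast ha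
  have hb' : (0 : ℝ) < b := lt_of_lt_of_le ha' (by exact_mod_cast hab)
  have h1 : (b : ℝ) ^ d / (b : ℝ) = (b : ℝ) ^ (d - 1) := by
    rw [Real.rpow_sub hb', Real.rpow_one]
  have h2 : (a : ℝ) ^ d / (a : ℝ) = (a : ℝ) ^ (d - 1) := by
    rw [Real.rpow_sub ha', Real.rpow_one]
  rw [h1, h2]
  exact Real.rpow_le_rpow_of_nonpos ha' (by exact_mod_cast hab)
    (by linarith)

theorem lower_bound_instance_is_NE (d : ℝ) (hd0 : 0 < d) (hd1 : d < 1)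
    (h : ℕ) (j : ℤ) (hj1 : 1 ≤ j) (hjh : j ≤ (h : ℤ)) :
    ∀ t' : ℤ, ((-j ≤ t' ∧ t' ≤ 0) ∨ (0 ≤ t' ∧ t' ≤ j)) → t'.natAbs ≠ j.natAbs →
      (lbLoad h t' + 1 ≤ j.natAbs) ∧
      ((j.natAbs : ℝ) ^ d / (j.natAbs : ℝ)
        ≤ ((lbLoad h t' + 1 : ℕ) : ℝ) ^ d / ((lbLoad h t' + 1 : ℕ) : ℝ)) := by
  intro t' hw hne
  have habs : t'.natAbs ≤ j.natAbs := by
    rcases hw with ⟨h1, h2⟩ | ⟨h1, h2⟩ <;> omega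
  have hload : lbLoad h t' = t'.natAbs := by
    unfold lbLoad
    have : t'.natAbs ≤ h := by omega
    simp [this]
  have hle : lbLoad h t' + 1 ≤ j.natAbs := by omega
  exact ⟨hle, pow_div_antitone d hd0 hd1 (by omega) hle⟩
end

section
/- In any Nash equilibrium (s, ξ) of the coordination mechanism with unit activation costs (c(0)=0, c(l)=1 for l ≥ 1), every job j either has ξ_j = 0 or every slot in its window other than s_j is unoccupied. -/
/-- Number of jobs declaring slot `t`. -/
def load {n : ℕ} (s : Fin n → ℤ) (t : ℤ) : ℕ :=
  (Finset.univ.filter fun j => s j = t).card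

/-- Total declared payment on slot `t`. -/
def pay {n : ℕ} (s : Fin n → ℤ) (ξ : Fin n → ℝ) (t : ℤ) : ℝ :=
  ∑ j ∈ Finset.univ.filter (fun j => s j = t), ξ j

/-- Unit activation cost: `c 0 = 0` and `c l = 1` for `l ≥ 1`. -/
def unitCost (l : ℕ) : ℝ := if l = 0 then 0 else 1

/-! An occupied slot already collects its full unit cost, so another job could join it for free;
the deviation condition therefore caps that job's payment at `0`. -/

theorem unitCost_of_ne_zero {l : ℕ} (hl : l ≠ 0) : unitCost l = 1 := if_neg hl

theorem unitCost_succ (l : ℕ) : unitCost (l + 1) = 1 := unitCost_of_ne_zero l.succ_ne_zero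

theorem exists_eq_of_load_ne_zero {n : ℕ} {s : Fin n → ℤ} {t : ℤ} (ht : load s t ≠ 0) :
    ∃ k, s k = t := by
  obtain ⟨k, hk⟩ := Finset.card_ne_zero.mp ht
  exact ⟨k, (Finset.mem_filter.mp hk).2⟩

theorem one_le_pay_of_load_ne_zero {n : ℕ} {s : Fin n → ℤ} {ξ : Fin n → ℝ}
    (hopen : ∀ j, unitCost (load s (s j)) ≤ pay s ξ (s j)) {t : ℤ} (ht : load s t ≠ 0) :
    1 ≤ pay s ξ t := by
  obtain ⟨k, rfl⟩ := exists_eq_of_load_ne_zero ht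
  simpa only [unitCost_of_ne_zero ht] using hopen k

theorem ne_zero_payment_or_window_empty_general {n : ℕ}
    (r e : Fin n → ℤ) (s : Fin n → ℤ) (ξ : Fin n → ℝ)
    (hξ : ∀ j, 0 ≤ ξ j)
    (hopen : ∀ j, unitCost (load s (s j)) ≤ pay s ξ (s j))
    (hdev : ∀ j, ∀ t ∈ Finset.Icc (r j) (e j), t ≠ s j →
      ξ j ≤ max 0 (unitCost (load s t + 1) - pay s ξ t)) :
    ∀ j, ξ j = 0 ∨ ∀ t ∈ Finset.Icc (r j) (e j), t ≠ s j → load s t = 0 := by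
  intro j
  refine or_iff_not_imp_left.mpr fun hj t ht hne => ?_
  by_contra hocc
  have hfull : 1 ≤ pay s ξ t := one_le_pay_of_load_ne_zero hopen hocc
  have hdevj := hdev j t ht hne
  rw [unitCost_succ, max_eq_left (by linarith)] at hdevj
  exact hj (le_antisymm hdevj (hξ j))

theorem ne_zero_payment_or_window_empty {n : ℕ}
    (r e : Fin n → ℤ) (s : Fin n → ℤ) (ξ : Fin n → ℝ)
    (hwin : ∀ j, s j ∈ Finset.Icc (r j) (e j))
    (hξ : ∀ j, 0 ≤ ξ j)
    (hopen : ∀ j, unitCost (load s (s j)) ≤ pay s ξ (s j))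
    (hdev : ∀ j, ∀ t ∈ Finset.Icc (r j) (e j), t ≠ s j →
      ξ j ≤ max 0 (unitCost (load s t + 1) - pay s ξ t))
    (hnec : ∀ j, ξ j ≤ max 0 (unitCost (load s (s j)) - (pay s ξ (s j) - ξ j))) :
    ∀ j, ξ j = 0 ∨ ∀ t ∈ Finset.Icc (r j) (e j), t ≠ s j → load s t = 0 :=
  ne_zero_payment_or_window_empty_general r e s ξ hξ hopen hdev
end
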